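/- Let 0 < γ < mn, take γ_i = γ/m for every i, let p⃗ be a vector of exponents, and let δ = γ - mn. Fix α > 0 and, for each i ∈ I_2, a nonnegative function g_i ∈ L^{p_i'}(ℝ^n). Put m_1 = #I_1 and define w(x) = (1+|x|^α)^{-m_1}, v_i(x) = e^{|x|} for i ∈ I_1, and v_i = g_i^{-1} for i ∈ I_2 (with v_i^{-1} := g_i). Then the pair (w,v⃗) satisfies the ℍ_m(p⃗,γ,γ-mn) inequality. -/

import Mathlib

/-! At the endpoint `δ = γ - mn` no decay of the weights is needed. Bounding the kernel
`(|B|^{1/n} + |x_B - y|)^{-(n - γ/m + 1/m)}` by its value at `y = x_B` pulls a factor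
`|B|^{-(n - γ/m + 1/m)/n}` out of each of the `m` factors, and their product is exactly
`|B|^{(δ - 1)/n}`. Hence `ℍ_m(p⃗, γ, γ - mn)` holds as soon as `w ∈ L^∞` and `v_i⁻¹ ∈ L^{p_i'}`
for every `i`; for the given weights `w ≤ 1`, `v_i⁻¹ ≤ 1` when `p_i = 1`, and `v_i⁻¹ = g_i`
otherwise. -/

open MeasureTheory Metric Set
open scoped ENNReal NNReal BigOperators Classical

noncomputable section

/-- Euclidean `n`-space. -/
abbrev Rn (n : ℕ) := EuclideanSpace ℝ (Fin n)

/-- The conjugate exponent in `ℝ≥0∞`. -/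
def conjE (q : ℝ≥0∞) : ℝ≥0∞ :=
  if q = 1 then ∞ else if q = ∞ then 1
  else ENNReal.ofReal (q.toReal / (q.toReal - 1))

/-- An `L^q`-type quantity on the set `s` for an `ℝ≥0∞`-valued function `g`:
the usual integral expression for `q < ∞`, and the essential supremum for `q = ∞`. -/
def lpOn {n : ℕ} (q : ℝ≥0∞) (g : Rn n → ℝ≥0∞) (s : Set (Rn n)) : ℝ≥0∞ :=
  if q = ∞ then essSup g (volume.restrict s)
  else (∫⁻ y in s, g y ^ q.toReal) ^ (1 / q.toReal)

/-- A weight: measurable, positive and finite a.e., and locally integrable. -/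
def IsWeight {n : ℕ} (u : Rn n → ℝ≥0∞) : Prop :=
  Measurable u ∧ (∀ᵐ x ∂(volume : Measure (Rn n)), 0 < u x ∧ u x < ∞) ∧
    ∀ (x : Rn n) (R : ℝ), 0 < R → ∫⁻ y in ball x R, u y < ∞

/-- The `i`-th factor in the `ℍ_m(p⃗,γ,δ)` condition, where `q = p_i'` is the
conjugate exponent of `p_i` (an essential supremum when `p_i = 1`). -/
def HmFactor {n : ℕ} (m : ℕ) (γi : ℝ) (q : ℝ≥0∞) (vi : Rn n → ℝ≥0∞)
    (xB : Rn n) (R : ℝ) : ℝ≥0∞ :=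
  lpOn q
    (fun y => (vi y)⁻¹ *
      (volume (ball xB R) ^ ((n : ℝ)⁻¹) + edist xB y) ^
        (-((n : ℝ) - γi + 1 / (m : ℝ))))
    Set.univ

/-- The class `ℍ_m(p⃗,γ,δ)` for a pair `(w, v⃗)`. -/
def Hm {n : ℕ} (m : ℕ) (γv : Fin m → ℝ) (δ : ℝ) (p : Fin m → ℝ≥0∞)
    (w : Rn n → ℝ≥0∞) (v : Fin m → Rn n → ℝ≥0∞) : Prop :=
  ∃ C : ℝ, 0 < C ∧ ∀ (xB : Rn n) (R : ℝ), 0 < R →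
    essSup w (volume.restrict (ball xB R)) *
        volume (ball xB R) ^ (-((δ - 1) / (n : ℝ))) *
        ∏ i, HmFactor m (γv i) (conjE (p i)) (v i) xB R
      ≤ ENNReal.ofReal C

/-- The global condition associated to `ℍ_m(p⃗,γ,δ)`. -/
def GlobalCond {n : ℕ} (m : ℕ) (γv : Fin m → ℝ) (δ : ℝ) (p : Fin m → ℝ≥0∞)
    (w : Rn n → ℝ≥0∞) (v : Fin m → Rn n → ℝ≥0∞) : Prop :=
  ∃ C : ℝ, 0 < C ∧ ∀ (xB : Rn n) (R : ℝ), 0 < R →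
    essSup w (volume.restrict (ball xB R)) *
        volume (ball xB R) ^ (-((δ - 1) / (n : ℝ))) *
        ∏ i, lpOn (conjE (p i))
          (fun y => (v i y)⁻¹ * edist xB y ^ (-((n : ℝ) - γv i + 1 / (m : ℝ))))
          (ball xB R)ᶜ
      ≤ ENNReal.ofReal C

/-- The local condition associated to `ℍ_m(p⃗,γ,δ)`. -/
def LocalCond {n : ℕ} (m : ℕ) (γ δ : ℝ) (p : Fin m → ℝ≥0∞)
    (w : Rn n → ℝ≥0∞) (v : Fin m → Rn n → ℝ≥0∞) : Prop :=
  ∃ C : ℝ, 0 < C ∧ ∀ (xB : Rn n) (R : ℝ), 0 < R →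
    essSup w (volume.restrict (ball xB R)) *
        volume (ball xB R) ^
          (-(δ / (n : ℝ)) + γ / (n : ℝ) - ∑ i, ((p i)⁻¹).toReal) *
        ∏ i, (volume (ball xB R) ^ (-(((conjE (p i))⁻¹).toReal)) *
          lpOn (conjE (p i)) (fun y => (v i y)⁻¹) (ball xB R))
      ≤ ENNReal.ofReal C

/-- The reverse Hölder class `RH_s`. -/
def memRH {n : ℕ} (s : ℝ) (u : Rn n → ℝ≥0∞) : Prop :=
  ∃ C : ℝ, 0 < C ∧ ∀ (x : Rn n) (R : ℝ), 0 < R →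
    ((volume (ball x R))⁻¹ * ∫⁻ y in ball x R, u y ^ s) ^ (1 / s) ≤
      ENNReal.ofReal C * ((volume (ball x R))⁻¹ * ∫⁻ y in ball x R, u y)

/-- The reverse Hölder class `RH_∞`. -/
def memRHinf {n : ℕ} (u : Rn n → ℝ≥0∞) : Prop :=
  ∃ C : ℝ, 0 < C ∧ ∀ (x : Rn n) (R : ℝ), 0 < R →
    essSup u (volume.restrict (ball x R)) ≤
      ENNReal.ofReal C * ((volume (ball x R))⁻¹ * ∫⁻ y in ball x R, u y)

/-- Doubling condition for an `ℝ≥0∞`-valued weight. -/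
def IsDoubling {n : ℕ} (u : Rn n → ℝ≥0∞) : Prop :=
  ∃ C : ℝ, 0 < C ∧ ∀ (x : Rn n) (R : ℝ), 0 < R →
    ∫⁻ y in ball x (2 * R), u y ≤ ENNReal.ofReal C * ∫⁻ y in ball x R, u y

/-- The multilinear class `A_{p⃗,∞}`. -/
def ApInfty {n : ℕ} (m : ℕ) (p : Fin m → ℝ≥0∞) (v : Fin m → Rn n → ℝ≥0∞) : Prop :=
  ∃ C : ℝ, 0 < C ∧ ∀ (xB : Rn n) (R : ℝ), 0 < R →
    essSup (fun x => ∏ i, v i x) (volume.restrict (ball xB R)) *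
        ∏ i, (volume (ball xB R) ^ (-(((conjE (p i))⁻¹).toReal)) *
          lpOn (conjE (p i)) (fun y => (v i y)⁻¹) (ball xB R))
      ≤ ENNReal.ofReal C

/-- The kernel of the modified multilinear fractional operator `J_{γ,m}`. -/
def Jker {n : ℕ} (m : ℕ) (γ : ℝ) (x : Rn n) (y : Fin m → Rn n) : ℝ :=
  (∑ i, dist x (y i)) ^ (γ - (m : ℝ) * (n : ℝ)) -
    (if ∀ i, y i ∈ ball (0 : Rn n) 1 then 0
     else (∑ i, dist (0 : Rn n) (y i)) ^ (γ - (m : ℝ) * (n : ℝ)))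

/-- The modified multilinear fractional operator `J_{γ,m}`. -/
def Jop {n m : ℕ} (γ : ℝ) (f : Fin m → Rn n → ℝ) (x : Rn n) : ℝ :=
  ∫ y : Fin m → Rn n, Jker m γ x y * ∏ i, f i (y i)

/-- The vector `(1,…,1)` in `ℝⁿ`. -/
def uvec (n : ℕ) : Rn n := (EuclideanSpace.equiv (Fin n) ℝ).symm fun _ => 1

/-- The quadrant `A` associated to a ball with center `xB`. -/
def Aset {n : ℕ} (xB : Rn n) : Set (Rn n) := {y | ∀ i, xB i ≤ y i}

/-- The set `C₁` associated to a ball `B(xB,R)`. -/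
def C1set {n : ℕ} (xB : Rn n) (R : ℝ) : Set (Rn n) :=
  ball (xB - (R / (12 * Real.sqrt n)) • uvec n) (R / (12 * Real.sqrt n)) ∩
    {y | ∀ i, y i ≤ (xB - (R / (12 * Real.sqrt n)) • uvec n) i}

/-- The set `C₂` associated to a ball `B(xB,R)`. -/
def C2set {n : ℕ} (xB : Rn n) (R : ℝ) : Set (Rn n) :=
  ball (xB - (R / (3 * Real.sqrt n)) • uvec n) (2 * R / 3) ∩
    {y | ∀ i, y i ≤ (xB - (R / (3 * Real.sqrt n)) • uvec n) i}

lemma conjE_one : conjE 1 = ∞ := by simp [conjE]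

lemma conjE_ne_zero {q : ℝ≥0∞} (hq : 1 ≤ q) : conjE q ≠ 0 := by
  unfold conjE
  split_ifs with h1 htop
  · exact ENNReal.top_ne_zero
  · exact one_ne_zero
  · have hq1 : 1 < q.toReal := by
      simpa using
        (ENNReal.toReal_lt_toReal ENNReal.one_ne_top htop).2 (lt_of_le_of_ne hq (Ne.symm h1))
    exact (ENNReal.ofReal_pos.2 (div_pos (by linarith) (by linarith))).ne'

lemma lpOn_eq_eLpNorm {n : ℕ} {q : ℝ≥0∞} (hq : q ≠ 0) (f : Rn n → ℝ≥0∞) (s : Set (Rn n)) :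
    lpOn q f s = eLpNorm f q (volume.restrict s) := by
  unfold lpOn
  split_ifs with htop
  · simp [htop, eLpNormEssSup_eq_essSup_enorm]
  · simp [eLpNorm_eq_lintegral_rpow_enorm_toReal hq htop]

lemma HmFactor_le_mul_eLpNorm {n m : ℕ} {γi : ℝ} (he : 0 ≤ (n : ℝ) - γi + 1 / m) {q : ℝ≥0∞}
    (hq : q ≠ 0) (vi : Rn n → ℝ≥0∞) (xB : Rn n) {R : ℝ} (hR : 0 < R) :
    HmFactor m γi q vi xB R ≤
      (volume (ball xB R) ^ (n : ℝ)⁻¹) ^ (-((n : ℝ) - γi + 1 / m)) *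
        eLpNorm (fun y => (vi y)⁻¹) q volume := by
  set r := volume (ball xB R) ^ (n : ℝ)⁻¹
  have hr0 : 0 < r := ENNReal.rpow_pos (measure_ball_pos volume xB hR) measure_ball_lt_top.ne
  have hrtop : r ≠ ∞ := ENNReal.rpow_ne_top_of_nonneg (by positivity) measure_ball_lt_top.ne
  have hc : r ^ (-((n : ℝ) - γi + 1 / m)) ≠ ∞ := by
    rw [ENNReal.rpow_neg, ENNReal.inv_ne_top]
    exact (ENNReal.rpow_pos hr0 hrtop).ne'
  rw [HmFactor, lpOn_eq_eLpNorm hq, Measure.restrict_univ, ← ENNReal.coe_toNNReal hc]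
  refine eLpNorm_le_mul_eLpNorm_of_ae_le_mul' (Filter.Eventually.of_forall fun y => ?_) q
  have hker :
      (r + edist xB y) ^ (-((n : ℝ) - γi + 1 / m)) ≤ r ^ (-((n : ℝ) - γi + 1 / m)) := by
    rw [ENNReal.rpow_neg, ENNReal.rpow_neg]
    exact ENNReal.inv_le_inv' (ENNReal.rpow_le_rpow le_self_add he)
  rw [ENNReal.coe_toNNReal hc, enorm_eq_self, enorm_eq_self, mul_comm]
  exact mul_le_mul_left hker _

lemma rpow_endpoint_exponents_cancel {V : ℝ≥0∞} (h0 : V ≠ 0) (htop : V ≠ ∞) {n m : ℕ}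
    (hm : m ≠ 0) (γ : ℝ) :
    V ^ (-((γ - m * n - 1) / n)) * ((V ^ (n : ℝ)⁻¹) ^ (-((n : ℝ) - γ / m + 1 / m))) ^ m = 1 := by
  have hm' : (m : ℝ) ≠ 0 := Nat.cast_ne_zero.2 hm
  rw [← ENNReal.rpow_natCast, ← ENNReal.rpow_mul, ← ENNReal.rpow_mul,
    ← ENNReal.rpow_add _ _ h0 htop]
  convert ENNReal.rpow_zero using 2
  field_simp
  ring

theorem Hm_endpoint_of_eLpNorm_ne_top {n m : ℕ} (hm : m ≠ 0) {γ : ℝ} (hγ : γ ≤ m * n + 1)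
    {p : Fin m → ℝ≥0∞} (hp : ∀ i, 1 ≤ p i) {w : Rn n → ℝ≥0∞} {v : Fin m → Rn n → ℝ≥0∞}
    (hw : essSup w volume ≠ ∞)
    (hv : ∀ i, eLpNorm (fun x => (v i x)⁻¹) (conjE (p i)) volume ≠ ∞) :
    Hm m (fun _ => γ / m) (γ - m * n) p w v := by
  set K := essSup w volume * ∏ i, eLpNorm (fun x => (v i x)⁻¹) (conjE (p i)) volume
  have hK : K ≠ ∞ := ENNReal.mul_ne_top hw (ENNReal.prod_ne_top fun i _ => hv i)
  have he : 0 ≤ (n : ℝ) - γ / m + 1 / m := by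
    have hm' : (0 : ℝ) < m := Nat.cast_pos.2 (Nat.pos_of_ne_zero hm)
    have : (n : ℝ) - γ / m + 1 / m = (m * n + 1 - γ) / m := by field_simp; ring
    rw [this]
    exact div_nonneg (by linarith) hm'.le
  refine ⟨K.toReal + 1, by positivity, fun xB R hR => ?_⟩
  set V := volume (ball xB R)
  calc essSup w (volume.restrict (ball xB R)) * V ^ (-((γ - m * n - 1) / n)) *
        ∏ i, HmFactor m (γ / m) (conjE (p i)) (v i) xB R
      ≤ essSup w volume * V ^ (-((γ - m * n - 1) / n)) *
        ∏ i, ((V ^ (n : ℝ)⁻¹) ^ (-((n : ℝ) - γ / m + 1 / m)) *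
          eLpNorm (fun x => (v i x)⁻¹) (conjE (p i)) volume) := by
        gcongr with i
        · exact essSup_mono_measure' Measure.restrict_le_self
        · exact HmFactor_le_mul_eLpNorm he (conjE_ne_zero (hp i)) _ xB hR
    _ = (V ^ (-((γ - m * n - 1) / n)) * ((V ^ (n : ℝ)⁻¹) ^ (-((n : ℝ) - γ / m + 1 / m))) ^ m) *
          K := by
        rw [Finset.prod_mul_distrib, Finset.prod_const, Finset.card_univ, Fintype.card_fin]
        ring
    _ = K := by
        rw [rpow_endpoint_exponents_cancel (measure_ball_pos volume xB hR).ne'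
          measure_ball_lt_top.ne hm, one_mul]
    _ ≤ ENNReal.ofReal (K.toReal + 1) := by
        rw [← ENNReal.ofReal_toReal hK]
        exact ENNReal.ofReal_le_ofReal (by simp)

theorem statement17_general {n m : ℕ} (hm : 1 ≤ m) (γ : ℝ)
    (hγ : γ < m * n) (p : Fin m → ℝ≥0∞) (hp : ∀ i, 1 ≤ p i)
    (α : ℝ) (g : Fin m → Rn n → ℝ)
    (hg : ∀ i, p i ≠ 1 → MemLp (g i) (conjE (p i)) volume) :
    Hm m (fun _ => γ / m) (γ - m * n) p
      (fun x => ENNReal.ofReal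
        ((1 + ‖x‖ ^ α) ^ (-(Nat.card {i : Fin m // p i = 1} : ℝ))))
      (fun i x => if p i = 1 then ENNReal.ofReal (Real.exp ‖x‖)
        else (ENNReal.ofReal (g i x))⁻¹) := by
  refine Hm_endpoint_of_eLpNorm_ne_top (Nat.one_le_iff_ne_zero.1 hm) (by linarith) hp ?_ fun i => ?_
  · refine ne_top_of_le_ne_top ENNReal.one_ne_top
      (essSup_le_of_ae_le 1 (Filter.Eventually.of_forall fun x => ?_))
    refine ENNReal.ofReal_le_one.2
      (Real.rpow_le_one_of_one_le_of_nonpos ?_ (neg_nonpos.2 (Nat.cast_nonneg _)))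
    linarith [Real.rpow_nonneg (norm_nonneg x) α]
  by_cases hpi : p i = 1
  · simp only [hpi, if_true, conjE_one, eLpNorm_exponent_top]
    refine ne_top_of_le_ne_top ENNReal.one_ne_top
      (essSup_le_of_ae_le 1 (Filter.Eventually.of_forall fun x => ?_))
    exact ENNReal.inv_le_one.2 (ENNReal.one_le_ofReal.2 (Real.one_le_exp (norm_nonneg x)))
  · simp only [hpi, if_false, inv_inv]
    refine ne_top_of_le_ne_top (hg i hpi).2.ne (eLpNorm_mono_enorm fun x => ?_)
    simpa only [enorm_eq_self] using Real.ofReal_le_enorm (g i x)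

/-- examples at the endpoint `δ = γ - mn`. -/
theorem statement17 {n m : ℕ} (hn : 1 ≤ n) (hm : 1 ≤ m) (γ : ℝ) (hγ0 : 0 < γ)
    (hγ : γ < m * n) (p : Fin m → ℝ≥0∞) (hp : ∀ i, 1 ≤ p i)
    (α : ℝ) (hα : 0 < α) (g : Fin m → Rn n → ℝ)
    (hg0 : ∀ i, p i ≠ 1 → ∀ x, 0 ≤ g i x)
    (hg : ∀ i, p i ≠ 1 → MemLp (g i) (conjE (p i)) volume) :
    Hm m (fun _ => γ / m) (γ - m * n) p
      (fun x => ENNReal.ofReal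
        ((1 + ‖x‖ ^ α) ^ (-(Nat.card {i : Fin m // p i = 1} : ℝ))))
      (fun i x => if p i = 1 then ENNReal.ofReal (Real.exp ‖x‖)
        else (ENNReal.ofReal (g i x))⁻¹) :=
  statement17_general hm γ hγ p hp α g hg
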